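/- Let ε > 0 and consider the operator L = ∂/∂x₁ + iε ∂/∂x₂ acting on functions on the torus T² = (R/2πZ)². If u, v are periodic functions with Lu = v and u has zero mean, then ‖(ε⁻¹∂_{x₁}u, ∂_{x₂}u)‖_{H^m} ≤ (C/ε)‖v‖_{H^m} for a constant C independent of ε. -/

import Mathlib

/-- The Japanese bracket squared `⟨k⟩² = 1 + k₁² + k₂²` of a frequency `k ∈ ℤ²`. -/
noncomputable def jap2 (k : ℤ × ℤ) : ℝ := 1 + (k.1 : ℝ) ^ 2 + (k.2 : ℝ) ^ 2

/-!
The symbol of `L` satisfies `|i(k₁ + iεk₂)|² = k₁² + ε²k₂² = ε²((k₁/ε)² + k₂²)`, so the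
estimate holds frequency by frequency, with equality and `C = 1`.
-/

lemma norm_sq_symbol_mul (a b ε : ℝ) (z : ℂ) :
    ‖Complex.I * ((a : ℂ) + Complex.I * (ε : ℂ) * (b : ℂ)) * z‖ ^ 2
      = (a ^ 2 + ε ^ 2 * b ^ 2) * ‖z‖ ^ 2 := by
  rw [norm_mul, norm_mul, Complex.norm_I, one_mul, mul_pow, Complex.sq_norm,
    Complex.normSq_apply]
  simp only [Complex.add_re, Complex.add_im, Complex.ofReal_re, Complex.ofReal_im,
    Complex.mul_re, Complex.mul_im, Complex.I_re, Complex.I_im]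
  ring

lemma div_sq_add_sq_mul_norm_sq_eq {a b ε : ℝ} (hε : ε ≠ 0) (z : ℂ) :
    ((a / ε) ^ 2 + b ^ 2) * ‖z‖ ^ 2
      = (1 / ε) ^ 2 * ‖Complex.I * ((a : ℂ) + Complex.I * (ε : ℂ) * (b : ℂ)) * z‖ ^ 2 := by
  rw [norm_sq_symbol_mul]
  field_simp

/-- Solvability estimate for `L = ∂_{x₁} + iε ∂_{x₂}` on the torus, on the Fourier side:
if `Lu = v`, i.e. `i(k₁ + iεk₂) û(k) = v̂(k)` for all `k ∈ ℤ²`, and `u` has zero mean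
(`û(0) = 0`), then `‖(ε⁻¹∂_{x₁}u, ∂_{x₂}u)‖_{H^m} ≤ (C/ε) ‖v‖_{H^m}`, with `C` independent
of `ε ∈ (0,1]` (the `H^m` norms written via the Plancherel formula). -/
theorem stmt5 (m : ℝ) :
    ∃ C > 0, ∀ ε : ℝ, 0 < ε → ε ≤ 1 →
      ∀ u v : ℤ × ℤ → ℂ,
        (∀ k : ℤ × ℤ, Complex.I * ((k.1 : ℂ) + Complex.I * (ε : ℂ) * (k.2 : ℂ)) * u k = v k) →
        u (0, 0) = 0 →
        ∑' k : ℤ × ℤ, jap2 k ^ m * (((k.1 : ℝ) / ε) ^ 2 + (k.2 : ℝ) ^ 2) * ‖u k‖ ^ 2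
          ≤ (C / ε) ^ 2 * ∑' k : ℤ × ℤ, jap2 k ^ m * ‖v k‖ ^ 2 := by
  refine ⟨1, one_pos, fun ε hε _ u v huv _ => le_of_eq ?_⟩
  rw [← tsum_mul_left]
  refine tsum_congr fun k => ?_
  have hk := div_sq_add_sq_mul_norm_sq_eq (a := k.1) (b := k.2) hε.ne' (u k)
  push_cast at hk
  rw [mul_assoc, hk, huv k]
  ring
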